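/- arXiv:2107.12267 — 4 statements merged into one kernel-verified Lean document; each statement's English description precedes it below -/
import Mathlib

section
/- Let D be a directed tree (an orientation of a tree), S, T ⊆ V(D) configurations with |S| = |T| such that every leaf of the underlying tree is in the symmetric difference S Δ T, and suppose there is a bijection μ : S → T such that for every s ∈ S, s ≠ μ(s) and there is a directed path from s to μ(s) in D. Then there exists a transforming sequence from S to T in D. -/
def doMove {V : Type*} [DecidableEq V] (C : Finset V) (m : V × V) : Finset V :=
  insert m.2 (C.erase m.1)

/-- A free path for the move from `s` to `t`: a path whose intermediate vertices
(the list `p`) avoid the tokens of the configuration `C`. -/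
def FreePath {V : Type*} (A : V → V → Prop) (C : Finset V) (s t : V) : Prop :=
  ∃ p : List V, List.Chain A s (p ++ [t]) ∧ ∀ v ∈ p, v ∉ C

def ValidMove {V : Type*} (A : V → V → Prop) (C : Finset V) (m : V × V) : Prop :=
  m.1 ∈ C ∧ m.2 ∉ C ∧ FreePath A C m.1 m.2

/-- `Transforms A S ms T`: the sequence of moves `ms`, each valid after its
predecessors, transforms the configuration `S` into the configuration `T`. -/
inductive Transforms {V : Type*} [DecidableEq V] (A : V → V → Prop) :
    Finset V → List (V × V) → Finset V → Prop
  | nil (C : Finset V) : Transforms A C [] C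
  | cons {C T : Finset V} {m : V × V} {ms : List (V × V)} :
      ValidMove A C m → Transforms A (doMove C m) ms T → Transforms A C (m :: ms) T

/-!
An orientation of an acyclic graph has no directed cycles. Keep a bijection between the tokens and
the targets in which every token can reach its target along a directed path. As long as some token
is not at its target, the walk described at `IsPathMatching.exists_move` produces a move along an
arc after which such a bijection still exists. Every such move sends a token to a vertex with
strictly fewer descendants, so the process ends, and it can only end with every token at its
target.
-/

open Relation

section

variable {V : Type*} {A : V → V → Prop}

section Orientation

variable [DecidableEq V] {G : SimpleGraph V}

theorem SimpleGraph.exists_isPath_of_reflTransGen (horient : ∀ a b, A a b → G.Adj a b)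
    {x y : V} (h : ReflTransGen A x y) :
    ∃ p : G.Walk x y, p.IsPath ∧ ∀ d ∈ p.darts, A d.fst d.snd := by
  induction h using ReflTransGen.head_induction_on with
  | refl => exact ⟨.nil, .nil, by simp⟩
  | @head a b hab _ ih =>
    obtain ⟨p, hp, hdarts⟩ := ih
    by_cases ha : a ∈ p.support
    · exact ⟨p.dropUntil a ha, hp.dropUntil ha,
        fun d hd => hdarts d (p.darts_dropUntil_subset_darts ha hd)⟩
    · refine ⟨.cons (horient a b hab) p, hp.cons ha, ?_⟩
      simp only [SimpleGraph.Walk.darts_cons, List.mem_cons, forall_eq_or_imp]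
      exact ⟨hab, hdarts⟩

/-- A directed cycle `x → y ⇝ x` would give a directed path from `y` to `x`, which in an acyclic
graph must be the single edge `y - x`, against the asymmetry of the orientation. -/
theorem SimpleGraph.IsAcyclic.not_transGen_self (hG : G.IsAcyclic)
    (horient : ∀ a b, A a b → G.Adj a b) (hasymm : ∀ a b, A a b → ¬ A b a) (x : V) :
    ¬ TransGen A x x := by
  intro hcycle
  obtain ⟨y, hxy, hyx⟩ := TransGen.head'_iff.mp hcycle
  have hadj : G.Adj y x := (horient x y hxy).symm
  obtain ⟨p, hp, hdarts⟩ := exists_isPath_of_reflTransGen horient hyx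
  have hedge : p = .cons hadj .nil :=
    congrArg Subtype.val ((hG.subsingleton_path y x).elim ⟨p, hp⟩ (.singleton hadj))
  exact hasymm x y hxy (hdarts ⟨(y, x), hadj⟩ (by simp [hedge]))

end Orientation

section Acyclic

variable [Finite V] {x y : V}

noncomputable def numDescendants (A : V → V → Prop) (v : V) : ℕ :=
  {w | TransGen A v w}.ncard

theorem numDescendants_lt (hacyc : ∀ v, ¬ TransGen A v v) (h : A x y) :
    numDescendants A y < numDescendants A x :=
  Set.ncard_lt_ncard ⟨fun _ hw => TransGen.head h hw,
    fun hsub => hacyc y (hsub (TransGen.single h))⟩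

theorem wellFounded_flip_of_acyclic (hacyc : ∀ v, ¬ TransGen A v v) : WellFounded (flip A) :=
  Subrelation.wf (numDescendants_lt (A := A) hacyc) (measure (numDescendants A)).wf

end Acyclic

section Matching

variable {C T : Finset V} {μ : V → V} {x y : V}

def IsPathMatching (A : V → V → Prop) (C T : Finset V) (μ : V → V) : Prop :=
  Set.BijOn μ C T ∧ ∀ v ∈ C, ReflTransGen A v (μ v)

namespace IsPathMatching

theorem eq_of_forall_fixed (h : IsPathMatching A C T μ) (hfix : ∀ v ∈ C, μ v = v) : C = T := by
  have hid : Set.EqOn μ id C := hfix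
  exact_mod_cast (h.1.image_eq.symm.trans (hid.image_eq.trans (Set.image_id _))).symm

variable [DecidableEq V]

theorem comp_swap_of_fixed (h : IsPathMatching A C T μ) (hx : x ∈ C) (hy : y ∈ C) (hxy : A x y)
    (hfix : μ y = y) (hyt : ReflTransGen A y (μ x)) :
    IsPathMatching A C T (μ ∘ Equiv.swap x y) := by
  refine ⟨h.1.comp (Equiv.swap_bijOn_self (by simp [hx, hy])), fun v hv => ?_⟩
  rcases eq_or_ne v x with rfl | hvx
  · simpa [hfix] using ReflTransGen.single hxy
  rcases eq_or_ne v y with rfl | hvy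
  · simpa using hyt
  · simpa [Equiv.swap_apply_of_ne_of_ne hvx hvy] using h.2 v hv

theorem move (h : IsPathMatching A C T μ) (hx : x ∈ C) (hy : y ∉ C)
    (hyt : ReflTransGen A y (μ x)) :
    IsPathMatching A (doMove C (x, y)) T (μ ∘ Equiv.swap x y) := by
  have hxy : x ≠ y := by rintro rfl; exact hy hx
  have hswap : Set.BijOn (Equiv.swap x y) ↑(doMove C (x, y)) C := by
    refine (Equiv.swap x y).bijOn fun v => ?_
    rcases eq_or_ne v x with rfl | hvx
    · simp [doMove, hy, hxy]
    rcases eq_or_ne v y with rfl | hvy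
    · simp [doMove, hx]
    · simp [doMove, Equiv.swap_apply_of_ne_of_ne hvx hvy, hvx, hvy]
  refine ⟨h.1.comp hswap, fun v hv => ?_⟩
  rcases eq_or_ne v y with rfl | hvy
  · simpa using hyt
  · have hvC : v ∈ C.erase x := (Finset.mem_insert.mp hv).resolve_left hvy
    simpa [Equiv.swap_apply_of_ne_of_ne (Finset.ne_of_mem_erase hvC) hvy]
      using h.2 v (Finset.mem_of_mem_erase hvC)

/-- Follow the directed path of an unmatched token `x` to its first step `y`. If `y` is free, move
`x` there; if `y` holds a token that is not yet home, continue from `y`; if `y` holds a token that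
is home, exchange the targets of `x` and `y` and continue from `y`. Since `A` has no infinite
forward chains, this terminates. -/
theorem exists_move (hwf : WellFounded (flip A)) (h : IsPathMatching A C T μ) (hx : x ∈ C)
    (hne : μ x ≠ x) :
    ∃ a b, a ∈ C ∧ b ∉ C ∧ A a b ∧ ∃ μ', IsPathMatching A (doMove C (a, b)) T μ' := by
  induction x using hwf.induction generalizing μ with
  | _ x ih =>
  obtain ⟨y, hxy, hyt⟩ : ∃ y, A x y ∧ ReflTransGen A y (μ x) :=
    ((h.2 x hx).cases_head).resolve_left hne.symm
  by_cases hy : y ∈ C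
  · by_cases hfix : μ y = y
    · have hxy_ne : x ≠ y := fun hxy' => hwf.irrefl.irrefl x (hxy' ▸ hxy)
      have hne' : μ x ≠ y := fun h' => hxy_ne (h.1.injOn hx hy (h'.trans hfix.symm))
      exact ih y hxy (h.comp_swap_of_fixed hx hy hxy hfix hyt) hy (by simpa using hne')
    · exact ih y hxy h hy hfix
  · exact ⟨x, y, hx, hy, hxy, _, h.move hx hy hyt⟩

end IsPathMatching

end Matching

section Transform

variable {C T : Finset V} {x y : V}

theorem validMove_of_rel (hx : x ∈ C) (hy : y ∉ C) (h : A x y) : ValidMove A C (x, y) :=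
  ⟨hx, hy, [], List.isChain_pair.mpr h, by simp⟩

variable [DecidableEq V]

theorem sum_doMove_lt {f : V → ℕ} (hx : x ∈ C) (hy : y ∉ C) (hf : f y < f x) :
    ∑ v ∈ doMove C (x, y), f v < ∑ v ∈ C, f v := by
  have hy' : y ∉ C.erase x := fun h => hy (Finset.mem_of_mem_erase h)
  rw [doMove, Finset.sum_insert hy', ← Finset.add_sum_erase C f hx]
  omega

theorem IsPathMatching.exists_transforms [Finite V] (hacyc : ∀ v, ¬ TransGen A v v)
    {C : Finset V} {μ : V → V} (h : IsPathMatching A C T μ) : ∃ ms, Transforms A C ms T := by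
  by_cases hfix : ∀ v ∈ C, μ v = v
  · obtain rfl := h.eq_of_forall_fixed hfix
    exact ⟨[], .nil C⟩
  push Not at hfix
  obtain ⟨x, hx, hne⟩ := hfix
  obtain ⟨a, b, ha, hb, hab, μ', h'⟩ := h.exists_move (wellFounded_flip_of_acyclic hacyc) hx hne
  have hdecrease := sum_doMove_lt (f := numDescendants A) ha hb (numDescendants_lt hacyc hab)
  obtain ⟨ms, hms⟩ := h'.exists_transforms hacyc
  exact ⟨(a, b) :: ms, .cons (validMove_of_rel ha hb hab) hms⟩
termination_by ∑ v ∈ C, numDescendants A v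

end Transform

end

theorem directed_tree_transformation_general {V : Type*} [Fintype V] [DecidableEq V]
    (G : SimpleGraph V) (hG : G.IsTree)
    (A : V → V → Prop)
    (horient : ∀ a b, A a b → G.Adj a b)
    (hcover : ∀ a b, G.Adj a b → (A a b ∨ A b a) ∧ ¬ (A a b ∧ A b a))
    (S T : Finset V)
    (μ : V → V) (hbij : Set.BijOn μ ↑S ↑T)
    (hμ : ∀ s ∈ S, s ≠ μ s ∧ Relation.ReflTransGen A s (μ s)) :
    ∃ ms, Transforms A S ms T := by
  have hasymm : ∀ a b, A a b → ¬ A b a := fun a b hab hba =>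
    (hcover a b (horient a b hab)).2 ⟨hab, hba⟩
  exact IsPathMatching.exists_transforms (hG.isAcyclic.not_transGen_self horient hasymm)
    ⟨hbij, fun s hs => (hμ s hs).2⟩

/-- Lemma (directed trees): let `A` be an orientation of a tree `G`, and let
`S`, `T` be configurations of equal size such that every leaf of the tree lies
in `S Δ T`. If there is a bijection `μ : S → T` with `s ≠ μ s` and a directed
path from `s` to `μ s` for every `s ∈ S`, then there is a transforming
sequence from `S` to `T`. -/
theorem directed_tree_transformation {V : Type*} [Fintype V] [DecidableEq V]
    (G : SimpleGraph V) [DecidableRel G.Adj] (hG : G.IsTree)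
    (A : V → V → Prop)
    (horient : ∀ a b, A a b → G.Adj a b)
    (hcover : ∀ a b, G.Adj a b → (A a b ∨ A b a) ∧ ¬ (A a b ∧ A b a))
    (S T : Finset V) (hcard : S.card = T.card)
    (hleaf : ∀ v : V, G.degree v = 1 → v ∈ (S \ T) ∪ (T \ S))
    (μ : V → V) (hbij : Set.BijOn μ ↑S ↑T)
    (hμ : ∀ s ∈ S, s ≠ μ s ∧ Relation.ReflTransGen A s (μ s)) :
    ∃ ms, Transforms A S ms T :=
  directed_tree_transformation_general G hG A horient hcover S T μ hbij hμ
end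

section
/- Let D be a digraph, S, T ⊆ V(D) with |S| = |T| = k, ℓ a natural number, and v ∈ S ∩ T a vertex such that there is no directed path in D from any vertex of S \ T to v. Then there is a transforming sequence from S to T in D of length at most ℓ if and only if there is a transforming sequence from S \ {v} to T \ {v} in D − v of length at most ℓ. (Assume S ∪ T = V(D), i.e., the instance is contracted.) -/
theorem List.isChain_cons_and_iff {α : Type*} {R : α → α → Prop} {P : α → Prop} {a : α} :
    ∀ {l : List α}, l ≠ [] →
      (IsChain (fun x y => P x ∧ P y ∧ R x y) (a :: l) ↔ IsChain R (a :: l) ∧ ∀ x ∈ a :: l, P x)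
  | [], h => absurd rfl h
  | [b], _ => by simp only [isChain_pair, mem_cons, not_mem_nil]; grind
  | b :: c :: l, _ => by
    rw [isChain_cons_cons, isChain_cons_and_iff (cons_ne_nil c l)]
    simp only [isChain_cons_cons, forall_mem_cons]
    tauto

section

open Finset

variable {V : Type*} [DecidableEq V] {A : V → V → Prop} {C T : Finset V} {m : V × V}
  {ms : List (V × V)} {v : V}

/-- The arc relation of `D - v`. -/
abbrev deleteVertex (A : V → V → Prop) (v : V) : V → V → Prop :=
  fun a b => a ≠ v ∧ b ≠ v ∧ A a b

omit [DecidableEq V] in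
theorem FreePath.mem_of_mem {R : Set V} (hR : ∀ ⦃a b⦄, A a b → b ∈ R → a ∈ R) {s t : V}
    (h : FreePath A C s t) (ht : t ∈ R) : s ∈ R := by
  obtain ⟨p, hp, -⟩ := h
  exact List.IsChain.backwards_cons_induction_head (· ∈ R) _ hp (by simp) hR ht

theorem freePath_deleteVertex_iff {s t : V} :
    FreePath (deleteVertex A v) C s t ↔ s ≠ v ∧ t ≠ v ∧ FreePath A (insert v C) s t := by
  simp only [FreePath, List.Chain, Finset.mem_insert,
    List.isChain_cons_and_iff (P := (· ≠ v)) (by simp : _ ++ [t] ≠ [])]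
  grind

theorem validMove_deleteVertex_iff :
    ValidMove (deleteVertex A v) C m ↔ m.1 ≠ v ∧ ValidMove A (insert v C) m := by
  simp only [ValidMove, freePath_deleteVertex_iff, Finset.mem_insert]
  grind

theorem mem_doMove {x : V} : x ∈ doMove C m ↔ x = m.2 ∨ x ≠ m.1 ∧ x ∈ C := by
  simp [doMove]

theorem doMove_insert (h : m.1 ≠ v) : doMove (insert v C) m = insert v (doMove C m) := by
  ext x
  simp only [mem_doMove, Finset.mem_insert]
  grind

theorem doMove_erase (h : m.2 ≠ v) : doMove (C.erase v) m = (doMove C m).erase v := by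
  ext x
  simp only [mem_doMove, Finset.mem_erase]
  grind

theorem ValidMove.fst_notMem_doMove (h : ValidMove A C m) : m.1 ∉ doMove C m := by
  have : m.1 ≠ m.2 := fun h' => h.2.1 (h' ▸ h.1)
  simp [mem_doMove, this]

theorem Transforms.insert (h : Transforms (deleteVertex A v) C ms T) (hv : v ∉ C) :
    Transforms A (insert v C) ms (insert v T) := by
  induction h with
  | nil => exact .nil _
  | @cons C T m ms hm _ ih =>
    obtain ⟨hm1, hm⟩ := validMove_deleteVertex_iff.1 hm
    have hm2 : m.2 ≠ v := fun h => hm.2.1 (h ▸ Finset.mem_insert_self v C)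
    refine .cons hm ?_
    rw [doMove_insert hm1]
    exact ih (by simp [mem_doMove, hv, Ne.symm hm2])

theorem Transforms.erase (h : Transforms A C ms T) (hv : v ∈ C) (hms : ∀ m ∈ ms, m.1 ≠ v) :
    Transforms (deleteVertex A v) (C.erase v) ms (T.erase v) := by
  induction h with
  | nil => exact .nil _
  | @cons C T m ms hm _ ih =>
    have hm1 : m.1 ≠ v := hms m List.mem_cons_self
    have hm2 : m.2 ≠ v := fun h => hm.2.1 (h ▸ hv)
    refine .cons (validMove_deleteVertex_iff.2 ⟨hm1, by rwa [Finset.insert_erase hv]⟩) ?_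
    rw [doMove_erase hm2]
    exact ih (mem_doMove.2 (.inr ⟨Ne.symm hm1, hv⟩)) fun m' h' => hms m' (.tail _ h')

variable {R : Finset V} (hR : ∀ ⦃a b⦄, A a b → b ∈ R → a ∈ R)
include hR

theorem ValidMove.card_doMove_inter_le (h : ValidMove A C m) :
    #(doMove C m ∩ R) ≤ #(C ∩ R) := by
  by_cases hm2 : m.2 ∈ R
  · have hm1 : m.1 ∈ C ∩ R := Finset.mem_inter.2 ⟨h.1, h.2.2.mem_of_mem hR hm2⟩
    calc #(doMove C m ∩ R) ≤ #(insert m.2 ((C ∩ R).erase m.1)) := by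
          refine Finset.card_le_card fun x hx => ?_
          simp only [Finset.mem_inter, mem_doMove, Finset.mem_insert, Finset.mem_erase] at hx ⊢
          grind
      _ ≤ #((C ∩ R).erase m.1) + 1 := Finset.card_insert_le _ _
      _ = #(C ∩ R) := Finset.card_erase_add_one hm1
  · refine Finset.card_le_card fun x hx => ?_
    simp only [Finset.mem_inter, mem_doMove] at hx ⊢
    grind

theorem Transforms.card_inter_le (h : Transforms A C ms T) : #(T ∩ R) ≤ #(C ∩ R) := by
  induction h with
  | nil => exact le_rfl
  | cons hm _ ih => exact ih.trans (hm.card_doMove_inter_le hR)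

/-- The number of tokens on the predecessor-closed set `R` cannot increase, so a sequence that
ends with `R` fully occupied starts with it fully occupied. -/
theorem Transforms.subset_of_subset (h : Transforms A C ms T) (hRT : R ⊆ T) : R ⊆ C := by
  have hcard : #R ≤ #(C ∩ R) := by
    simpa only [Finset.inter_eq_right.2 hRT] using h.card_inter_le hR
  rw [← Finset.eq_of_subset_of_card_le Finset.inter_subset_right hcard]
  exact Finset.inter_subset_left

theorem Transforms.fst_notMem (h : Transforms A C ms T) (hRT : R ⊆ T) : ∀ m ∈ ms, m.1 ∉ R := by
  induction h with
  | nil => simp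
  | cons hm ht ih =>
    rintro m' (_ | ⟨_, hm'⟩)
    · exact fun h => hm.fst_notMem_doMove (ht.subset_of_subset hR hRT h)
    · exact ih hRT m' hm'

end

theorem delete_unreachable_obstacle_general {V : Type*} [DecidableEq V]
    (A : V → V → Prop) (S T : Finset V) (ℓ : ℕ)
    (hcontr : (↑S ∪ ↑T : Set V) = Set.univ)
    (v : V) (hv : v ∈ S ∩ T)
    (hnopath : ∀ u ∈ S \ T, ¬ Relation.ReflTransGen A u v) :
    (∃ ms, Transforms A S ms T ∧ ms.length ≤ ℓ) ↔
    (∃ ms, Transforms (fun a b => a ≠ v ∧ b ≠ v ∧ A a b)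
        (S.erase v) ms (T.erase v) ∧ ms.length ≤ ℓ) := by
  classical
  obtain ⟨hvS, hvT⟩ := Finset.mem_inter.1 hv
  let R := T.filter (Relation.ReflTransGen A · v)
  have hR : ∀ ⦃a b⦄, A a b → b ∈ R → a ∈ R := by
    intro a b hab hb
    have hav := Relation.ReflTransGen.head hab (Finset.mem_filter.1 hb).2
    have haST : a ∈ (↑S ∪ ↑T : Set V) := hcontr ▸ Set.mem_univ a
    refine Finset.mem_filter.2 ⟨?_, hav⟩
    by_contra haT
    exact hnopath a (Finset.mem_sdiff.2 ⟨haST.resolve_right haT, haT⟩) hav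
  constructor
  · rintro ⟨ms, h, hl⟩
    have hfst : ∀ m ∈ ms, m.1 ≠ v := fun m hm hmv =>
      h.fst_notMem hR (Finset.filter_subset _ T) m hm (hmv ▸ Finset.mem_filter.2 ⟨hvT, .refl⟩)
    exact ⟨ms, h.erase hvS hfst, hl⟩
  · rintro ⟨ms, h, hl⟩
    refine ⟨ms, ?_, hl⟩
    simpa only [Finset.insert_erase hvS, Finset.insert_erase hvT] using
      h.insert (Finset.notMem_erase v S)

/-- For a contracted instance of unlabelled directed token moving and an
obstacle `v ∈ S ∩ T` with no directed path from any vertex of `S \ T` to `v`,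
deleting `v` preserves the existence of a transforming sequence of length at
most `ℓ`. -/
theorem delete_unreachable_obstacle {V : Type*} [DecidableEq V]
    (A : V → V → Prop) (S T : Finset V) (k ℓ : ℕ)
    (hS : S.card = k) (hT : T.card = k)
    (hcontr : (↑S ∪ ↑T : Set V) = Set.univ)
    (v : V) (hv : v ∈ S ∩ T)
    (hnopath : ∀ u ∈ S \ T, ¬ Relation.ReflTransGen A u v) :
    (∃ ms, Transforms A S ms T ∧ ms.length ≤ ℓ) ↔
    (∃ ms, Transforms (fun a b => a ≠ v ∧ b ≠ v ∧ A a b)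
        (S.erase v) ms (T.erase v) ∧ ms.length ≤ ℓ) :=
  delete_unreachable_obstacle_general A S T ℓ hcontr v hv hnopath
end

section
/- Let α be a transforming sequence from S to T in a graph, with last move m = (s,t), and let α' be α with m removed, transforming S into T' = (T \ {t}) ∪ {s}. Suppose γ is a transforming sequence from S to a configuration U where U = (T' \ {v}) ∪ {u} for some vertices u ∉ T' and v ∈ T' with v ≠ s. If the move m = (s,t) is not valid at configuration U (i.e., every path from s to t is blocked by a token of U), then there exists a path from u to t all of whose intermediate vertices are free of tokens of U. -/
/-!
Since `(s, t)` is the last move of `α`, it is valid at `T'`, so some path from `s` to `t` avoids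
`T'`. As `U ⊆ T' ∪ {u}`, the only token of `U` that can lie on this path is `u`; if the path
avoids `u` the move is not blocked at `U`, and otherwise its part after `u` is a free `u`-`t` path.
-/

lemma Transforms.exists_of_append_singleton {V : Type*} [DecidableEq V] {A : V → V → Prop}
    {S T : Finset V} {ms : List (V × V)} {m : V × V} (h : Transforms A S (ms ++ [m]) T) :
    ∃ C, Transforms A S ms C ∧ ValidMove A C m ∧ doMove C m = T := by
  induction ms generalizing S with
  | nil =>
    cases h with
    | cons hm hnil => cases hnil; exact ⟨S, .nil S, hm, rfl⟩
  | cons a ms ih =>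
    cases h with
    | cons ha hrest =>
      obtain ⟨C, hC, hm, hdo⟩ := ih hrest
      exact ⟨C, .cons ha hC, hm, hdo⟩

lemma insert_erase_doMove {V : Type*} [DecidableEq V] {C : Finset V} {s t : V}
    (hs : s ∈ C) (ht : t ∉ C) : insert s ((doMove C (s, t)).erase t) = C := by
  rw [doMove, Finset.erase_insert fun h => ht (Finset.mem_of_mem_erase h),
    Finset.insert_erase hs]

lemma FreePath.cons {V : Type*} {A : V → V → Prop} {C : Finset V} {s w t : V}
    (hsw : A s w) (hw : w ∉ C) (h : FreePath A C w t) : FreePath A C s t := by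
  obtain ⟨p, hp, hpC⟩ := h
  exact ⟨w :: p, List.isChain_cons_cons.2 ⟨hsw, hp⟩, List.forall_mem_cons.2 ⟨hw, hpC⟩⟩

lemma FreePath.or_of_subset_insert {V : Type*} [DecidableEq V] {A : V → V → Prop}
    {C U : Finset V} {u s t : V} (hU : U ⊆ insert u C) (h : FreePath A C s t) :
    FreePath A U s t ∨ FreePath A U u t := by
  obtain ⟨p, hp, hpC⟩ := h
  induction p generalizing s with
  | nil => exact .inl ⟨[], hp, by simp⟩
  | cons w p ih =>
    obtain ⟨hsw, hp⟩ := List.isChain_cons_cons.1 hp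
    obtain ⟨hwC, hpC⟩ := List.forall_mem_cons.1 hpC
    rcases ih hp hpC with hw | hu
    · by_cases hwu : w = u
      · exact .inr (hwu ▸ hw)
      · refine .inl (hw.cons hsw fun hwU => ?_)
        rcases Finset.mem_insert.1 (hU hwU) with h | h
        exacts [hwu h, hwC h]
    · exact .inr hu

theorem blocked_move_gives_free_path_general {V : Type*} [DecidableEq V]
    (G : SimpleGraph V) (S T : Finset V) (ms : List (V × V)) (s t : V)
    (hα : Transforms G.Adj S (ms ++ [(s, t)]) T)
    (T' : Finset V) (hT' : T' = insert s (T.erase t))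
    (u v : V)
    (U : Finset V) (hU : U = insert u (T'.erase v))
    (hblocked : ¬ FreePath G.Adj U s t) :
    FreePath G.Adj U u t := by
  obtain ⟨C, -, ⟨hsC, htC, hfree⟩, rfl⟩ := hα.exists_of_append_singleton
  have hT'C : T' = C := hT'.trans (insert_erase_doMove hsC htC)
  have hUC : U ⊆ insert u C := by
    rw [hU, ← hT'C]
    exact Finset.insert_subset_insert _ (Finset.erase_subset _ _)
  exact (hfree.or_of_subset_insert hUC).resolve_left hblocked

/-- Observation: let `α = ms ++ [(s,t)]` be a transforming sequence from `S`
to `T`, so that `ms` transforms `S` into `T' = (T \ {t}) ∪ {s}`. Suppose `γ`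
transforms `S` into `U = (T' \ {v}) ∪ {u}` with `u ∉ T'`, `v ∈ T'`, `v ≠ s`.
If the move `(s,t)` is blocked at `U` (there is no free path from `s` to `t`),
then there is a free path from `u` to `t` (all intermediate vertices avoid the
tokens of `U`). -/
theorem blocked_move_gives_free_path {V : Type*} [DecidableEq V]
    (G : SimpleGraph V) (S T : Finset V) (ms : List (V × V)) (s t : V)
    (hα : Transforms G.Adj S (ms ++ [(s, t)]) T)
    (T' : Finset V) (hT' : T' = insert s (T.erase t))
    (u v : V) (hu : u ∉ T') (hv : v ∈ T') (hvs : v ≠ s)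
    (U : Finset V) (hU : U = insert u (T'.erase v))
    (γ : List (V × V)) (hγ : Transforms G.Adj S γ U)
    (hblocked : ¬ FreePath G.Adj U s t) :
    FreePath G.Adj U u t :=
  blocked_move_gives_free_path_general G S T ms s t hα T' hT' u v U hU hblocked
end

section
/- Let G be an undirected graph with S ∪ T = V(G), |S| = |T|, and suppose α is a transforming sequence from S to T of minimum length in which no token moves more than once. Then the number of moves in α equals |S \ T| + c, where c is the number of vertices in S ∩ T that are the source of some move in α. In particular, the length of any shortest transforming sequence is at least |S \ T|. -/
/-!
A vertex that is never the source of a move keeps its token, so every vertex of `S \ T`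
is a source. When all sources lie in `S` and are pairwise distinct, the number of moves
is the number of sources, which splits into `S \ T` and the sources in `S ∩ T`.
-/

namespace Transforms

variable {V : Type*} [DecidableEq V] {A : V → V → Prop} {C T : Finset V} {ms : List (V × V)}

lemma mem_of_mem_of_not_mem_sources (h : Transforms A C ms T) {v : V} (hv : v ∈ C)
    (hns : v ∉ ms.map Prod.fst) : v ∈ T := by
  induction h with
  | nil => exact hv
  | cons _ _ ih =>
    simp only [List.map_cons, List.mem_cons, not_or] at hns
    exact ih (Finset.mem_insert_of_mem (Finset.mem_erase.2 ⟨hns.1, hv⟩)) hns.2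

lemma sdiff_subset_sources (h : Transforms A C ms T) :
    C \ T ⊆ (ms.map Prod.fst).toFinset := fun v hv => by
  rw [Finset.mem_sdiff] at hv
  by_contra hns
  exact hv.2 (h.mem_of_mem_of_not_mem_sources hv.1 (by simpa using hns))

lemma card_sdiff_le_length (h : Transforms A C ms T) : (C \ T).card ≤ ms.length :=
  calc (C \ T).card ≤ (ms.map Prod.fst).toFinset.card :=
        Finset.card_le_card h.sdiff_subset_sources
    _ ≤ (ms.map Prod.fst).length := List.toFinset_card_le _
    _ = ms.length := List.length_map _

end Transforms

lemma Finset.card_eq_card_sdiff_add_card_filter_inter {V : Type*} [DecidableEq V]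
    {F S T : Finset V} (hFS : F ⊆ S) (hST : S \ T ⊆ F) :
    F.card = (S \ T).card + ((S ∩ T).filter (· ∈ F)).card := by
  rw [← Finset.card_filter_add_card_filter_not (s := F) (p := (· ∉ T))]
  congr 2 <;> ext v <;> simp only [Finset.mem_filter, Finset.mem_sdiff, Finset.mem_inter, not_not]
  · exact ⟨fun hv => ⟨hFS hv.1, hv.2⟩, fun hv => ⟨hST (Finset.mem_sdiff.2 hv), hv.2⟩⟩
  · exact ⟨fun hv => ⟨⟨hFS hv.1, hv.2⟩, hv.1⟩, fun hv => ⟨hv.2, hv.1.2⟩⟩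

theorem shortest_length_eq_general {V : Type*} [DecidableEq V]
    (G : SimpleGraph V) (S T : Finset V)
    (ms : List (V × V)) (h : Transforms G.Adj S ms T)
    (honce₁ : ∀ m ∈ ms, m.1 ∈ S) (honce₂ : (ms.map Prod.fst).Nodup) :
    ms.length =
      (S \ T).card + ((S ∩ T).filter (fun w => w ∈ ms.map Prod.fst)).card ∧
    ∀ ms', Transforms G.Adj S ms' T → (S \ T).card ≤ ms'.length := by
  have hsources : (ms.map Prod.fst).toFinset ⊆ S := fun v hv => by
    obtain ⟨m, hm, rfl⟩ := List.mem_map.1 (List.mem_toFinset.1 hv)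
    exact honce₁ m hm
  refine ⟨?_, fun _ h' => h'.card_sdiff_le_length⟩
  rw [← List.length_map (f := Prod.fst), ← List.toFinset_card_of_nodup honce₂,
    Finset.card_eq_card_sdiff_add_card_filter_inter hsources h.sdiff_subset_sources]
  simp only [List.mem_toFinset]

/-- For a contracted instance, a shortest transforming sequence in which no
token moves more than once has length `|S \ T| + c`, where `c` is the number
of vertices of `S ∩ T` that are the source of some move; in particular every
transforming sequence has length at least `|S \ T|`. -/
theorem shortest_length_eq {V : Type*} [DecidableEq V]
    (G : SimpleGraph V) (S T : Finset V)
    (hcard : S.card = T.card) (hcontr : (↑S ∪ ↑T : Set V) = Set.univ)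
    (ms : List (V × V)) (h : Transforms G.Adj S ms T)
    (hmin : ∀ ms', Transforms G.Adj S ms' T → ms.length ≤ ms'.length)
    (honce₁ : ∀ m ∈ ms, m.1 ∈ S) (honce₂ : (ms.map Prod.fst).Nodup) :
    ms.length =
      (S \ T).card + ((S ∩ T).filter (fun w => w ∈ ms.map Prod.fst)).card ∧
    ∀ ms', Transforms G.Adj S ms' T → (S \ T).card ≤ ms'.length :=
  shortest_length_eq_general G S T ms h honce₁ honce₂
end
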